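/- arXiv:1510.05155 — 3 statements merged into one kernel-verified Lean document; each statement's English description precedes it below -/
import Mathlib

section
/- For all x, y ∈ ℝ³, the distance D(x,y) is greater than or equal to the Euclidean distance |x − y|. -/
open Metric Set

/-- The polygonal distance through the `x₃`-axis: horizontal Euclidean distance when the
third coordinates agree, and otherwise the length of the path going horizontally to the
`x₃`-axis, vertically along it, and horizontally out to the second point. -/
noncomputable def D (x y : EuclideanSpace ℝ (Fin 3)) : ℝ :=
  if x 2 = y 2 then Real.sqrt ((y 0 - x 0) ^ 2 + (y 1 - x 1) ^ 2)
  else Real.sqrt ((x 0) ^ 2 + (x 1) ^ 2) + |x 2 - y 2| + Real.sqrt ((y 0) ^ 2 + (y 1) ^ 2)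

/-- `D` dominates the Euclidean distance. -/
theorem euclidean_dist_le_D (x y : EuclideanSpace ℝ (Fin 3)) :
    dist x y ≤ D x y := by
  rw [EuclideanSpace.dist_eq, Fin.sum_univ_three]
  simp only [Real.dist_eq, sq_abs, D]
  split_ifs with h
  · rw [h]
    apply Real.sqrt_le_sqrt
    ring_nf
    nlinarith [sq_nonneg (x 2 - y 2)]
  · set a := x 0; set b := x 1; set c := y 0; set d := y 1
    have s1 := Real.sq_sqrt (by positivity : (0:ℝ) ≤ a ^ 2 + b ^ 2)
    have s2 := Real.sq_sqrt (by positivity : (0:ℝ) ≤ c ^ 2 + d ^ 2)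
    have n1 := Real.sqrt_nonneg (a ^ 2 + b ^ 2)
    have n2 := Real.sqrt_nonneg (c ^ 2 + d ^ 2)
    have nt : (0:ℝ) ≤ |x 2 - y 2| := abs_nonneg _
    have ht : |x 2 - y 2| ^ 2 = (x 2 - y 2) ^ 2 := sq_abs _
    rw [show Real.sqrt (a ^ 2 + b ^ 2) + |x 2 - y 2| + Real.sqrt (c ^ 2 + d ^ 2)
        = Real.sqrt ((Real.sqrt (a ^ 2 + b ^ 2) + |x 2 - y 2| + Real.sqrt (c ^ 2 + d ^ 2)) ^ 2)
        from (Real.sqrt_sq (by positivity)).symm]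
    apply Real.sqrt_le_sqrt
    nlinarith [sq_nonneg (a * d - b * c), sq_nonneg (a * c + b * d),
      Real.sq_sqrt (mul_nonneg (by positivity : (0:ℝ) ≤ a ^ 2 + b ^ 2) (by positivity : (0:ℝ) ≤ c ^ 2 + d ^ 2)),
      Real.sqrt_mul_self (mul_nonneg n1 n2),
      mul_nonneg n1 nt, mul_nonneg n2 nt, mul_nonneg n1 n2,
      sq_nonneg (Real.sqrt (a ^ 2 + b ^ 2) * Real.sqrt (c ^ 2 + d ^ 2) - (a * c + b * d)),
      sq_nonneg (a*c + b*d)]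
end

section
/- Let P ∈ ℝ³ with P₃ = 0, let r = √(P₁²+P₂²) be its distance to the x₃-axis, and let t > 0. If Q ∈ ℝ³ satisfies D(P,Q) ≥ 2r + t, then the Euclidean distance satisfies |Q − P| ≥ (√2/2)·t. -/
open Metric Set

set_option maxHeartbeats 1000000 in
/-- if `P₃ = 0`, `r` is the distance of `P` to the `x₃`-axis, `t > 0` and
`D(P,Q) ≥ 2r + t`, then the Euclidean distance `|Q − P|` is at least `(√2/2)·t`. -/
theorem dist_ge_of_D_ge (P Q : EuclideanSpace ℝ (Fin 3)) (r t : ℝ)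
    (hP3 : P 2 = 0) (hr : r = Real.sqrt ((P 0) ^ 2 + (P 1) ^ 2)) (ht : 0 < t)
    (hD : 2 * r + t ≤ D P Q) :
    Real.sqrt 2 / 2 * t ≤ dist Q P := by
  have s2 : Real.sqrt 2 ^ 2 = 2 := Real.sq_sqrt (by norm_num)
  have s2n : 0 ≤ Real.sqrt 2 := Real.sqrt_nonneg 2
  have hrn : 0 ≤ r := hr ▸ Real.sqrt_nonneg _
  have hdist : dist Q P = Real.sqrt ((Q 0 - P 0) ^ 2 + (Q 1 - P 1) ^ 2 + (Q 2 - P 2) ^ 2) := by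
    rw [EuclideanSpace.dist_eq, Fin.sum_univ_three]
    simp [Real.dist_eq, sq_abs]
  by_cases hc : P 2 = Q 2
  · have hD' : D P Q = Real.sqrt ((Q 0 - P 0) ^ 2 + (Q 1 - P 1) ^ 2) := by
      simp [D, hc]
    have h2 : D P Q ≤ dist Q P := by
      rw [hD', hdist]
      apply Real.sqrt_le_sqrt
      nlinarith [sq_nonneg (Q 2 - P 2)]
    have hle : Real.sqrt 2 / 2 ≤ 1 := by nlinarith
    nlinarith
  · set h := Real.sqrt ((Q 0 - P 0) ^ 2 + (Q 1 - P 1) ^ 2) with hh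
    set sQ := Real.sqrt ((Q 0) ^ 2 + (Q 1) ^ 2) with hsQ
    have hhn : 0 ≤ h := Real.sqrt_nonneg _
    have hsQn : 0 ≤ sQ := Real.sqrt_nonneg _
    have hh2 : h ^ 2 = (Q 0 - P 0) ^ 2 + (Q 1 - P 1) ^ 2 := Real.sq_sqrt (by positivity)
    have hsQ2 : sQ ^ 2 = (Q 0) ^ 2 + (Q 1) ^ 2 := Real.sq_sqrt (by positivity)
    have hr2 : r ^ 2 = (P 0) ^ 2 + (P 1) ^ 2 := by
      rw [hr]; exact Real.sq_sqrt (by positivity)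
    -- Cauchy–Schwarz in the plane
    have hd : P 0 * (Q 0 - P 0) + P 1 * (Q 1 - P 1) ≤ r * h := by
      have h1 : (P 0 * (Q 0 - P 0) + P 1 * (Q 1 - P 1)) ^ 2 ≤ (r * h) ^ 2 := by
        nlinarith [sq_nonneg (P 0 * (Q 1 - P 1) - P 1 * (Q 0 - P 0))]
      calc P 0 * (Q 0 - P 0) + P 1 * (Q 1 - P 1)
          ≤ |P 0 * (Q 0 - P 0) + P 1 * (Q 1 - P 1)| := le_abs_self _
        _ = Real.sqrt ((P 0 * (Q 0 - P 0) + P 1 * (Q 1 - P 1)) ^ 2) :=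
            (Real.sqrt_sq_eq_abs _).symm
        _ ≤ Real.sqrt ((r * h) ^ 2) := Real.sqrt_le_sqrt h1
        _ = r * h := Real.sqrt_sq (mul_nonneg hrn hhn)
    -- triangle inequality: sQ ≤ r + h
    have htri : sQ ≤ r + h := by
      rw [hsQ, ← Real.sqrt_sq (by positivity : (0:ℝ) ≤ r + h)]
      apply Real.sqrt_le_sqrt
      nlinarith [hd]
    have hD' : D P Q = r + |P 2 - Q 2| + sQ := by
      simp only [D, hc, if_false, hr, hsQ]
    have habs : |P 2 - Q 2| = |Q 2 - P 2| := abs_sub_comm _ _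
    have hkey : t ≤ |Q 2 - P 2| + h := by
      rw [hD', habs] at hD; linarith
    have habsn : 0 ≤ |Q 2 - P 2| := abs_nonneg _
    have habs2 : |Q 2 - P 2| ^ 2 = (Q 2 - P 2) ^ 2 := sq_abs _
    have hfin : t ^ 2 / 2 ≤ (Q 0 - P 0) ^ 2 + (Q 1 - P 1) ^ 2 + (Q 2 - P 2) ^ 2 := by
      nlinarith [hkey, sq_nonneg (|Q 2 - P 2| - h), hh2, habs2, habsn, hhn]
    rw [hdist]
    rw [Real.le_sqrt' (by positivity)]
    have hsq : (Real.sqrt 2 / 2 * t) ^ 2 = t ^ 2 / 2 := by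
      rw [mul_pow, div_pow, s2]; ring
    linarith
end

section
/- Let P = (r, 0, 0) with r ≥ 0 and let t > 0. For every s with 0 < s ≤ r + t, the intersection of the open D-ball B^D(P, 2r+t) with the horizontal plane {x₃ = s} equals the open Euclidean disk {(x₁, x₂, s) : x₁² + x₂² < (r + t − s)²} centered at (0,0,s); moreover the intersection of B^D(P, 2r+t) with {x₃ = 0} is the open disk of radius 2r + t centered at P. -/
open Metric Set

/-- horizontal slices of the open `D`-ball `B^D(P, 2r+t)` centered at
`P = (r,0,0)`: at height `s ∈ (0, r+t]` the slice is the open Euclidean disk of radius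
`r + t − s` about `(0,0,s)`, while at height `0` it is the open disk of radius `2r+t`
about `P`. -/
theorem D_ball_slices (r t : ℝ) (hr : 0 ≤ r) (ht : 0 < t)
    (P : EuclideanSpace ℝ (Fin 3)) (hP0 : P 0 = r) (hP1 : P 1 = 0) (hP2 : P 2 = 0) :
    (∀ s : ℝ, 0 < s → s ≤ r + t →
      {Q : EuclideanSpace ℝ (Fin 3) | D P Q < 2 * r + t ∧ Q 2 = s} =
        {Q : EuclideanSpace ℝ (Fin 3) | Q 2 = s ∧ (Q 0) ^ 2 + (Q 1) ^ 2 < (r + t - s) ^ 2}) ∧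
    {Q : EuclideanSpace ℝ (Fin 3) | D P Q < 2 * r + t ∧ Q 2 = 0} =
      {Q : EuclideanSpace ℝ (Fin 3) | Q 2 = 0 ∧ (Q 0 - r) ^ 2 + (Q 1) ^ 2 < (2 * r + t) ^ 2} := by
  constructor
  · intro s hs hsle
    ext Q
    simp only [Set.mem_setOf_eq, D, hP0, hP1, hP2]
    have hsq : Real.sqrt (r ^ 2 + 0 ^ 2) = r := by
      rw [show r ^ 2 + (0:ℝ) ^ 2 = r ^ 2 by ring, Real.sqrt_sq hr]
    constructor
    · rintro ⟨hlt, hQ2⟩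
      refine ⟨hQ2, ?_⟩
      rw [hQ2, if_neg (by linarith), hsq, abs_of_nonpos (by linarith)] at hlt
      have h3 : 0 ≤ Real.sqrt (Q 0 ^ 2 + Q 1 ^ 2) := Real.sqrt_nonneg _
      nlinarith [Real.sq_sqrt (by positivity : (0:ℝ) ≤ Q 0 ^ 2 + Q 1 ^ 2)]
    · rintro ⟨hQ2, hlt⟩
      refine ⟨?_, hQ2⟩
      rw [hQ2, if_neg (by linarith), hsq, abs_of_nonpos (by linarith)]
      have h2 : Real.sqrt (Q 0 ^ 2 + Q 1 ^ 2) < r + t - s := by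
        have := Real.sqrt_lt_sqrt (by positivity) hlt
        rwa [Real.sqrt_sq (by linarith)] at this
      linarith
  · ext Q
    simp only [Set.mem_setOf_eq, D, hP0, hP1, hP2]
    constructor
    · rintro ⟨hlt, hQ2⟩
      refine ⟨hQ2, ?_⟩
      rw [if_pos hQ2.symm] at hlt
      have h3 : 0 ≤ Real.sqrt ((Q 0 - r) ^ 2 + (Q 1 - 0) ^ 2) := Real.sqrt_nonneg _
      nlinarith [Real.sq_sqrt (by positivity : (0:ℝ) ≤ (Q 0 - r) ^ 2 + (Q 1 - 0) ^ 2)]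
    · rintro ⟨hQ2, hlt⟩
      refine ⟨?_, hQ2⟩
      rw [if_pos hQ2.symm]
      have h2 : Real.sqrt ((Q 0 - r) ^ 2 + (Q 1 - 0) ^ 2) < 2 * r + t := by
        have h : (Q 0 - r) ^ 2 + (Q 1 - 0) ^ 2 < (2 * r + t) ^ 2 := by nlinarith
        have := Real.sqrt_lt_sqrt (by positivity) h
        rwa [Real.sqrt_sq (by linarith)] at this
      linarith
end
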